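/- Let p ≥ 1, let D be a p×p diagonal matrix with strictly positive diagonal entries, let Σ be a p×p symmetric positive definite matrix, and let ξ, μ ∈ ℝ^p and y ∈ ℝ^p with y ≠ μ. Set m = (y − μ)ᵀ(DΣD)^{−1}(y − μ), d = ξᵀΣ^{−1}ξ, and ν = (2 − p)/2. Then ∫₀^∞ (2πw)^{−p/2} (det(DΣD))^{−1/2} exp(−(1/(2w))(y − μ − wDξ)ᵀ(DΣD)^{−1}(y − μ − wDξ)) e^{−w} dw = (2 exp((y − μ)ᵀD^{−1}Σ^{−1}ξ) / ((2π)^{p/2} (det(DΣD))^{1/2})) · (m/(2 + d))^{ν/2} · K_ν(√((2 + d) m)), where K_ν(x) = ∫₀^∞ e^{−x cosh t} cosh(ν t) dt. -/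

import Mathlib

open Real MeasureTheory Matrix

/-!
Expanding the quadratic form, the exponent of the integrand is
`c - (m / w + (2 + d) w) / 2` with `c = (y - μ)ᵀ D⁻¹ Σ⁻¹ ξ`, so the integral is a generalized
inverse Gaussian integral `∫₀^∞ w^(ν-1) e^{-(χ/w + ψ w)/2} dw = 2 (χ/ψ)^(ν/2) K_ν(√(χψ))`.
The substitution `w = √(χ/ψ) eᵗ` turns the latter into `∫_ℝ e^{νt - √(χψ) cosh t} dt`,
which is `2 K_ν(√(χψ))` after folding the line onto the half-line.
-/

/-- The modified Bessel function of the third kind, via the integral representation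
`K_ν(x) = ∫₀^∞ e^{-x cosh t} cosh(ν t) dt`. -/
noncomputable def besselK (ν x : ℝ) : ℝ :=
  ∫ t in Set.Ioi (0 : ℝ), exp (-x * cosh t) * cosh (ν * t)

lemma sq_div_four_le_cosh (t : ℝ) : t ^ 2 / 4 ≤ cosh t := by
  have h₁ := quadratic_le_exp_of_nonneg (abs_nonneg t)
  have h₂ : exp |t| ≤ 2 * cosh t := by rw [cosh_eq]; linarith [exp_abs_le t]
  nlinarith [sq_abs t, abs_nonneg t]

lemma integrable_exp_mul_sub_mul_cosh (ν : ℝ) {x : ℝ} (hx : 0 < x) :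
    Integrable (fun t ↦ exp (ν * t - x * cosh t)) := by
  have hgauss : Integrable (fun t ↦ exp (ν ^ 2 / x) * exp (-(x / 4) * (t - 2 * ν / x) ^ 2)) :=
    ((integrable_exp_neg_mul_sq (by positivity)).comp_sub_right _).const_mul _
  refine hgauss.mono' (by fun_prop) (.of_forall fun t ↦ ?_)
  rw [norm_of_nonneg (exp_pos _).le, ← exp_add, exp_le_exp]
  have hcosh := mul_le_mul_of_nonneg_left (sq_div_four_le_cosh t) hx.le
  have hsq : ν ^ 2 / x + -(x / 4) * (t - 2 * ν / x) ^ 2 = ν * t - x * (t ^ 2 / 4) := by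
    field_simp; ring
  linarith

lemma integral_exp_mul_sub_mul_cosh (ν : ℝ) {x : ℝ} (hx : 0 < x) :
    ∫ t, exp (ν * t - x * cosh t) = 2 * besselK ν x := by
  have hf := integrable_exp_mul_sub_mul_cosh ν hx
  have hsym : ∀ t, exp (ν * t - x * cosh t) + exp (ν * -t - x * cosh (-t)) =
      2 * (exp (-x * cosh |t|) * cosh (ν * |t|)) := by
    intro t
    rw [cosh_abs, cosh_neg, cosh_eq (ν * |t|)]
    rcases abs_cases t with ⟨ht, -⟩ | ⟨ht, -⟩ <;> rw [ht] <;>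
    · simp only [neg_mul, mul_neg, neg_neg, sub_eq_add_neg, exp_add]; ring
  calc ∫ t, exp (ν * t - x * cosh t)
      = ((∫ t, exp (ν * t - x * cosh t)) + ∫ t, exp (ν * -t - x * cosh (-t))) / 2 := by
        rw [integral_neg_eq_self (fun t ↦ exp (ν * t - x * cosh t))]; ring
    _ = (∫ t, 2 * (exp (-x * cosh |t|) * cosh (ν * |t|))) / 2 := by
        rw [← integral_add hf hf.comp_neg]; simp_rw [hsym]
    _ = 2 * besselK ν x := by
        rw [integral_const_mul, integral_comp_abs (f := fun t ↦ exp (-x * cosh t) * cosh (ν * t)),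
          besselK]
        ring

lemma integral_rpow_mul_exp_neg_div_add_mul_self (ν : ℝ) {z : ℝ} (hz : 0 < z) :
    ∫ s in Set.Ioi 0, s ^ (ν - 1) * exp (-(z / s + z * s) / 2) = 2 * besselK ν z := by
  have hsub := integral_image_eq_integral_abs_deriv_smul MeasurableSet.univ
    (fun t _ ↦ (hasDerivAt_exp t).hasDerivWithinAt) exp_injective.injOn
    (fun s ↦ s ^ (ν - 1) * exp (-(z / s + z * s) / 2))
  rw [Set.image_univ, range_exp, Measure.restrict_univ] at hsub
  rw [hsub, ← integral_exp_mul_sub_mul_cosh ν hz]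
  congr 1 with t
  rw [smul_eq_mul, abs_of_pos (exp_pos t), ← exp_mul, ← exp_add, ← exp_add, cosh_eq, exp_neg]
  congr 1
  field_simp
  ring

lemma integral_rpow_mul_exp_neg_div_add_mul (ν : ℝ) {χ ψ : ℝ} (hχ : 0 < χ) (hψ : 0 < ψ) :
    ∫ w in Set.Ioi 0, w ^ (ν - 1) * exp (-(χ / w + ψ * w) / 2) =
      2 * (χ / ψ) ^ (ν / 2) * besselK ν (√(χ * ψ)) := by
  set c := √(χ / ψ) with hc_def
  have hc : 0 < c := by positivity
  have hcsq : c ^ 2 = χ / ψ := sq_sqrt (by positivity)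
  have hcχ : χ / c = √(χ * ψ) := by
    rw [← sqrt_sq (by positivity : 0 ≤ χ / c), div_pow, hcsq]; congr 1; field_simp
  have hcψ : ψ * c = √(χ * ψ) := by
    rw [← sqrt_sq (by positivity : 0 ≤ ψ * c), mul_pow, hcsq]; congr 1; field_simp
  have hpow : c ^ ν = (χ / ψ) ^ (ν / 2) := by
    rw [hc_def, sqrt_eq_rpow, ← rpow_mul (by positivity)]; ring_nf
  have hscale :=
    integral_comp_mul_left_Ioi (fun w ↦ w ^ (ν - 1) * exp (-(χ / w + ψ * w) / 2)) 0 hc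
  rw [mul_zero, smul_eq_mul, eq_inv_mul_iff_mul_eq₀ hc.ne'] at hscale
  rw [← hscale, ← hpow, setIntegral_congr_fun measurableSet_Ioi (g := fun s ↦ c ^ (ν - 1) *
      (s ^ (ν - 1) * exp (-(√(χ * ψ) / s + √(χ * ψ) * s) / 2))), integral_const_mul,
    integral_rpow_mul_exp_neg_div_add_mul_self ν (by positivity)]
  · rw [rpow_sub_one hc.ne']; field_simp
  · intro s (hs : 0 < s)
    have hexp : χ / (c * s) + ψ * (c * s) = √(χ * ψ) / s + √(χ * ψ) * s :=
      calc χ / (c * s) + ψ * (c * s) = χ / c / s + ψ * c * s := by ring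
        _ = √(χ * ψ) / s + √(χ * ψ) * s := by rw [hcχ, hcψ]
    dsimp only
    rw [mul_rpow hc.le hs.le, hexp]
    ring

lemma integral_normal_exp_mixture (k c δ : ℝ) {m d : ℝ} (hm : 0 < m) (hd : 0 < 2 + d)
    (hδ : 0 ≤ δ) :
    ∫ w in Set.Ioi 0, (2 * π * w) ^ (-k / 2) * δ ^ (-(1 : ℝ) / 2) *
        exp (-(1 / (2 * w)) * (m - 2 * w * c + w ^ 2 * d)) * exp (-w) =
      2 * exp c / ((2 * π) ^ (k / 2) * δ ^ ((1 : ℝ) / 2)) *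
        (m / (2 + d)) ^ ((2 - k) / 2 / 2) * besselK ((2 - k) / 2) (√((2 + d) * m)) := by
  have hw : ∀ w ∈ Set.Ioi (0 : ℝ), (2 * π * w) ^ (-k / 2) * δ ^ (-(1 : ℝ) / 2) *
      exp (-(1 / (2 * w)) * (m - 2 * w * c + w ^ 2 * d)) * exp (-w) =
      ((2 * π) ^ (-k / 2) * δ ^ (-(1 : ℝ) / 2) * exp c) *
        (w ^ ((2 - k) / 2 - 1) * exp (-(m / w + (2 + d) * w) / 2)) := by
    intro w (hw : 0 < w)
    have hexp : -(1 / (2 * w)) * (m - 2 * w * c + w ^ 2 * d) + -w =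
        c + -(m / w + (2 + d) * w) / 2 := by
      field_simp; ring
    rw [mul_rpow (by positivity) hw.le, show (2 - k) / 2 - 1 = -k / 2 by ring,
      mul_assoc _ (exp _), ← exp_add, hexp, exp_add]
    ring
  rw [setIntegral_congr_fun measurableSet_Ioi hw, integral_const_mul,
    integral_rpow_mul_exp_neg_div_add_mul _ hm hd, mul_comm m, neg_div, rpow_neg (by positivity),
    neg_div, rpow_neg hδ]
  field_simp

namespace Matrix

variable {n R : Type*} [Fintype n] [CommRing R]

lemma sub_smul_dotProduct_mulVec_sub_smul {M : Matrix n n R} (hM : M.IsSymm) (u v : n → R)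
    (w : R) :
    (v - w • u) ⬝ᵥ (M *ᵥ (v - w • u)) =
      v ⬝ᵥ (M *ᵥ v) - 2 * w * (v ⬝ᵥ (M *ᵥ u)) + w ^ 2 * (u ⬝ᵥ (M *ᵥ u)) := by
  have hMuv : u ⬝ᵥ (M *ᵥ v) = v ⬝ᵥ (M *ᵥ u) := by
    rw [dotProduct_mulVec, ← mulVec_transpose, hM.eq, dotProduct_comm]
  simp only [mulVec_sub, mulVec_smul, sub_dotProduct, dotProduct_sub, smul_dotProduct,
    dotProduct_smul, hMuv, smul_eq_mul]
  ring

variable [DecidableEq n] {D : Matrix n n R}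

lemma inv_mul_mul_self_mulVec_mulVec (hD : IsUnit D) (A : Matrix n n R) (x : n → R) :
    (D * A * D)⁻¹ *ᵥ (D *ᵥ x) = (D⁻¹ * A⁻¹) *ᵥ x := by
  rw [mulVec_mulVec, Matrix.mul_inv_rev, Matrix.mul_inv_rev, Matrix.mul_assoc, Matrix.mul_assoc,
    nonsing_inv_mul _ ((isUnit_iff_isUnit_det D).1 hD), Matrix.mul_one]

lemma mulVec_dotProduct_inv_mul_mulVec (hDs : D.IsSymm) (hD : IsUnit D) (M : Matrix n n R)
    (x y : n → R) :
    (D *ᵥ x) ⬝ᵥ ((D⁻¹ * M) *ᵥ y) = x ⬝ᵥ (M *ᵥ y) := by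
  rw [← vecMul_transpose, ← dotProduct_mulVec, hDs.eq, mulVec_mulVec, ← Matrix.mul_assoc,
    mul_nonsing_inv _ ((isUnit_iff_isUnit_det D).1 hD), Matrix.one_mul]

lemma PosDef.mul_mul_self_of_isSymm {A D : Matrix n n ℝ} (hA : A.PosDef) (hDs : D.IsSymm)
    (hD : IsUnit D) : (D * A * D).PosDef := by
  simpa [hDs.eq] using hA.conjTranspose_mul_mul_same (mulVec_injective_iff_isUnit.2 hD)

end Matrix

theorem mal_density_mixture_integral_general (p : ℕ)
    (δ : Fin p → ℝ) (hδ : ∀ j, 0 < δ j)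
    (D : Matrix (Fin p) (Fin p) ℝ) (hD : D = diagonal δ)
    (A : Matrix (Fin p) (Fin p) ℝ) (hA : A.PosDef)
    (ξ μ y : Fin p → ℝ) (hy : y ≠ μ)
    (m d ν : ℝ)
    (hm : m = (y - μ) ⬝ᵥ ((D * A * D)⁻¹ *ᵥ (y - μ)))
    (hd : d = ξ ⬝ᵥ (A⁻¹ *ᵥ ξ))
    (hν : ν = (2 - (p : ℝ)) / 2) :
    (∫ w in Set.Ioi (0 : ℝ),
        (2 * π * w) ^ (-(p : ℝ) / 2) * (D * A * D).det ^ (-(1 : ℝ) / 2) *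
          exp (-(1 / (2 * w)) *
            ((y - μ - w • (D *ᵥ ξ)) ⬝ᵥ ((D * A * D)⁻¹ *ᵥ (y - μ - w • (D *ᵥ ξ))))) *
          exp (-w)) =
      (2 * exp ((y - μ) ⬝ᵥ ((D⁻¹ * A⁻¹) *ᵥ ξ)) /
          ((2 * π) ^ ((p : ℝ) / 2) * (D * A * D).det ^ ((1 : ℝ) / 2))) *
        (m / (2 + d)) ^ (ν / 2) * besselK ν (Real.sqrt ((2 + d) * m)) := by
  have hDu : IsUnit D := by
    rw [isUnit_iff_isUnit_det, hD, det_diagonal, isUnit_iff_ne_zero]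
    exact (Finset.prod_pos fun j _ ↦ hδ j).ne'
  have hDs : D.IsSymm := by rw [hD]; exact isSymm_diagonal δ
  have hS := hA.mul_mul_self_of_isSymm hDs hDu
  have hq (w : ℝ) := sub_smul_dotProduct_mulVec_sub_smul
    (isHermitian_iff_isSymm.1 hS.inv.isHermitian) (D *ᵥ ξ) (y - μ) w
  have hm₀ : 0 < (y - μ) ⬝ᵥ ((D * A * D)⁻¹ *ᵥ (y - μ)) := by
    simpa using hS.inv.dotProduct_mulVec_pos (sub_ne_zero.2 hy)
  have hd₀ : 0 ≤ ξ ⬝ᵥ (A⁻¹ *ᵥ ξ) := by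
    simpa using hA.inv.posSemidef.dotProduct_mulVec_nonneg ξ
  subst hm hd hν
  simp only [hq, inv_mul_mul_self_mulVec_mulVec hDu, mulVec_dotProduct_inv_mul_mulVec hDs hDu]
  exact integral_normal_exp_mixture p _ _ hm₀ (by linarith) hS.det_pos.le

/-- The density of the Gaussian location-scale mixture
`Y = μ + DξW + √W (DΣD)^{1/2}Z`, `W ~ Exp(1)`, obtained by integrating the
`N_p(μ + Dξw, wDΣD)` density against the standard exponential density, equals the
Multivariate Asymmetric Laplace density `MAL_p(μ, Dξ, DΣD)` of Kotz et al. -/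
theorem mal_density_mixture_integral (p : ℕ) (hp : 1 ≤ p)
    (δ : Fin p → ℝ) (hδ : ∀ j, 0 < δ j)
    (D : Matrix (Fin p) (Fin p) ℝ) (hD : D = diagonal δ)
    (A : Matrix (Fin p) (Fin p) ℝ) (hA : A.PosDef)
    (ξ μ y : Fin p → ℝ) (hy : y ≠ μ)
    (m d ν : ℝ)
    (hm : m = (y - μ) ⬝ᵥ ((D * A * D)⁻¹ *ᵥ (y - μ)))
    (hd : d = ξ ⬝ᵥ (A⁻¹ *ᵥ ξ))
    (hν : ν = (2 - (p : ℝ)) / 2) :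
    (∫ w in Set.Ioi (0 : ℝ),
        (2 * π * w) ^ (-(p : ℝ) / 2) * (D * A * D).det ^ (-(1 : ℝ) / 2) *
          exp (-(1 / (2 * w)) *
            ((y - μ - w • (D *ᵥ ξ)) ⬝ᵥ ((D * A * D)⁻¹ *ᵥ (y - μ - w • (D *ᵥ ξ))))) *
          exp (-w)) =
      (2 * exp ((y - μ) ⬝ᵥ ((D⁻¹ * A⁻¹) *ᵥ ξ)) /
          ((2 * π) ^ ((p : ℝ) / 2) * (D * A * D).det ^ ((1 : ℝ) / 2))) *
        (m / (2 + d)) ^ (ν / 2) * besselK ν (Real.sqrt ((2 + d) * m)) :=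
  mal_density_mixture_integral_general p δ hδ D hD A hA ξ μ y hy m d ν hm hd hν
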